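/- arXiv:2406.15122 — 2 statements merged into one kernel-verified Lean document; each statement's English description precedes it below -/
import Mathlib

section
/- Suppose a ∈ ℓ¹(ℤ) with Fourier transform â, and suppose â(ω) is real with μ ≥ â(ω) ≥ ν > 0 for all ω ∈ 𝕋. Let g ∈ ℓ²(ℤ) be the sequence with ĝ = indicator of (−1/4, 1/4). Then for every s ∈ ℕ and every integer n with |n| ≤ 1, |(a^(s) ∗ g)(n)| ≥ (2/π)·ν^s. -/
open scoped Real

/-- Convolution of two sequences on `ℤ`. -/
noncomputable def conv (x y : ℤ → ℂ) (j : ℤ) : ℂ := ∑' k : ℤ, x k * y (j - k)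

/-- `s`-fold convolution power of a kernel (`a^(0)` is the Dirac delta). -/
noncomputable def convPow (a : ℤ → ℂ) : ℕ → ℤ → ℂ
  | 0 => fun n => if n = 0 then 1 else 0
  | s + 1 => conv a (convPow a s)

/-- `â(ω) := ∑_{k∈ℤ} a(k) e^{-2πikω}`. -/
noncomputable def ahat (a : ℤ → ℂ) (ω : ℝ) : ℂ :=
  ∑' k : ℤ, a k * Complex.exp (-2 * π * Complex.I * k * ω)

/-- The sequence whose Fourier transform is the indicator of `(-1/4, 1/4)`. -/
noncomputable def g (n : ℤ) : ℂ :=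
  if n = 0 then 1 else 2 * Real.sin (n * Real.pi / 2) / (n * Real.pi)

/-!
Since `ahat` turns convolution into multiplication, `ahat (a^(s)) = (ahat a)^s`, and expanding
`g (n - k)` as an integral of a character and exchanging sum and integral gives
`(h ∗ g)(n) = 2 ∫_{-1/4}^{1/4} ĥ(ω) e^{2πinω} dω` for every `h ∈ ℓ¹(ℤ)`. When `ĥ ≥ c` is real, the
real part of the integrand is `ĥ(ω) cos(2πnω) ≥ c cos(2πnω)` because `cos(2πnω) ≥ 0` for `|n| ≤ 1`
and `|ω| ≤ 1/4`; integrating back yields `Re (h ∗ g)(n) ≥ c · g(n)`, and `g(n) ≥ 2/π` for `|n| ≤ 1`.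
-/

open FourierTransform MeasureTheory

lemma ahat_eq_tsum_fourierChar (a : ℤ → ℂ) (ω : ℝ) :
    ahat a ω = ∑' k : ℤ, a k * 𝐞 (-(k * ω)) := by
  refine tsum_congr fun k => ?_
  rw [Real.fourierChar_apply]
  push_cast
  ring_nf

lemma summable_norm_mul_fourierChar {a : ℤ → ℂ} (ha : Summable fun k => ‖a k‖) (f : ℤ → ℝ) :
    Summable fun k => ‖a k * 𝐞 (f k)‖ := by
  simpa only [norm_mul, Circle.norm_coe, mul_one] using ha

def convIndexEquiv : ℤ × ℤ ≃ ℤ × ℤ where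
  toFun q := (q.1 + q.2, q.1)
  invFun p := (p.2, p.1 - p.2)
  left_inv := by rintro ⟨k, m⟩; simp
  right_inv := by rintro ⟨j, k⟩; simp

lemma summable_norm_conv_summand {b c : ℤ → ℂ} (hb : Summable fun k => ‖b k‖)
    (hc : Summable fun k => ‖c k‖) :
    Summable fun p : ℤ × ℤ => ‖b p.2 * c (p.1 - p.2)‖ := by
  refine (convIndexEquiv.summable_iff (f := fun p : ℤ × ℤ => ‖b p.2 * c (p.1 - p.2)‖)).mp ?_
  refine (hb.mul_of_nonneg hc (fun _ => norm_nonneg _) fun _ => norm_nonneg _).congr fun q => ?_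
  simp [convIndexEquiv]

lemma summable_norm_conv {b c : ℤ → ℂ} (hb : Summable fun k => ‖b k‖)
    (hc : Summable fun k => ‖c k‖) : Summable fun j => ‖conv b c j‖ := by
  have h := summable_norm_conv_summand hb hc
  exact h.prod.of_nonneg_of_le (fun _ => norm_nonneg _)
    fun j => norm_tsum_le_tsum_norm (h.prod_factor j)

lemma ahat_conv {b c : ℤ → ℂ} (hb : Summable fun k => ‖b k‖)
    (hc : Summable fun k => ‖c k‖) (ω : ℝ) :
    ahat (conv b c) ω = ahat b ω * ahat c ω := by
  have h : Summable fun p : ℤ × ℤ => b p.2 * c (p.1 - p.2) * 𝐞 (-(p.1 * ω)) :=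
    Summable.of_norm <| by
      simpa only [norm_mul, Circle.norm_coe, mul_one] using summable_norm_conv_summand hb hc
  calc ahat (conv b c) ω
      = ∑' j : ℤ, ∑' k : ℤ, b k * c (j - k) * 𝐞 (-(j * ω)) := by
        simp only [ahat_eq_tsum_fourierChar, conv, tsum_mul_right]
    _ = ∑' q : ℤ × ℤ, b q.1 * 𝐞 (-(q.1 * ω)) * (c q.2 * 𝐞 (-(q.2 * ω))) := by
        rw [← h.tsum_prod, ← convIndexEquiv.tsum_eq]
        refine tsum_congr fun q => ?_
        simp only [convIndexEquiv, Equiv.coe_fn_mk, add_sub_cancel_left]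
        rw [Int.cast_add, add_mul, neg_add, AddChar.map_add_eq_mul, Circle.coe_mul]
        ring
    _ = ahat b ω * ahat c ω := by
        rw [ahat_eq_tsum_fourierChar, ahat_eq_tsum_fourierChar, tsum_mul_tsum_of_summable_norm
          (summable_norm_mul_fourierChar hb _) (summable_norm_mul_fourierChar hc _)]

lemma summable_norm_convPow {a : ℤ → ℂ} (ha : Summable fun k => ‖a k‖) (s : ℕ) :
    Summable fun k => ‖convPow a s k‖ := by
  induction s with
  | zero =>
    refine summable_of_ne_finset_zero (s := {0}) fun k hk => ?_
    simp_all [convPow]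
  | succ s ih => exact summable_norm_conv ha ih

lemma ahat_convPow {a : ℤ → ℂ} (ha : Summable fun k => ‖a k‖) (s : ℕ) (ω : ℝ) :
    ahat (convPow a s) ω = ahat a ω ^ s := by
  induction s with
  | zero =>
    rw [ahat, tsum_eq_single 0 fun k hk => by simp [convPow, hk]]
    simp [convPow]
  | succ s ih =>
    rw [convPow, ahat_conv ha (summable_norm_convPow ha s), ih, pow_succ']

lemma continuous_ahat {a : ℤ → ℂ} (ha : Summable fun k => ‖a k‖) : Continuous (ahat a) := by
  simp only [funext (ahat_eq_tsum_fourierChar a)]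
  refine continuous_tsum (fun k => by fun_prop) ha fun k ω => ?_
  rw [norm_mul, Circle.norm_coe, mul_one]

lemma fourierChar_eq_exp_mul (x : ℝ) : (𝐞 x : ℂ) = Complex.exp (2 * π * Complex.I * x) := by
  rw [Real.fourierChar_apply]
  push_cast
  ring_nf

lemma re_fourierChar (x : ℝ) : (𝐞 x : ℂ).re = Real.cos (2 * π * x) := by
  rw [Real.fourierChar_apply, Complex.exp_ofReal_mul_I_re]

lemma g_eq_integral (m : ℤ) : g m = 2 * ∫ ω in -(1/4 : ℝ)..1/4, (𝐞 (m * ω) : ℂ) := by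
  rcases eq_or_ne m 0 with rfl | hm
  · norm_num [g]
  have hc : 2 * π * Complex.I * m ≠ 0 := by simp [hm, Real.pi_ne_zero]
  simp only [fourierChar_eq_exp_mul, Complex.ofReal_mul, Complex.ofReal_intCast, ← mul_assoc]
  rw [integral_exp_mul_complex hc, g, if_neg hm]
  push_cast
  rw [Complex.sin]
  field_simp
  ring_nf
  simp only [Complex.I_sq]
  ring

lemma conv_g_eq_integral {h : ℤ → ℂ} (hh : Summable fun k => ‖h k‖) (n : ℤ) :
    conv h g n = 2 * ∫ ω in -(1/4 : ℝ)..1/4, ahat h ω * 𝐞 (n * ω) := by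
  have hle : -(1/4 : ℝ) ≤ 1/4 := by norm_num
  set F : ℤ → ℝ → ℂ := fun k ω => h k * 𝐞 (-(k * ω)) * 𝐞 (n * ω)
  have hF : ∀ k ω, h k * 𝐞 (((n - k : ℤ) : ℝ) * ω) = F k ω := fun k ω => by
    simp only [F]
    rw [mul_assoc, ← Circle.coe_mul, ← AddChar.map_add_eq_mul]
    push_cast
    ring_nf
  have hF_int : ∀ k, Integrable (F k) (volume.restrict (Set.Ioc (-(1/4)) (1/4))) := fun k =>
    Continuous.integrableOn_Ioc (by fun_prop)
  have hF_sum : Summable fun k => ∫ ω in Set.Ioc (-(1/4 : ℝ)) (1/4), ‖F k ω‖ := by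
    simp only [F, norm_mul, Circle.norm_coe, mul_one, setIntegral_const]
    exact hh.const_smul _
  calc conv h g n
      = 2 * ∑' k : ℤ, ∫ ω in -(1/4 : ℝ)..1/4, h k * 𝐞 (((n - k : ℤ) : ℝ) * ω) := by
        simp only [conv, g_eq_integral, intervalIntegral.integral_const_mul, ← tsum_mul_left]
        exact tsum_congr fun k => by ring
    _ = 2 * ∫ ω in -(1/4 : ℝ)..1/4, ∑' k : ℤ, F k ω := by
        simp only [hF, intervalIntegral.integral_of_le hle]
        rw [integral_tsum_of_summable_integral_norm hF_int hF_sum]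
    _ = 2 * ∫ ω in -(1/4 : ℝ)..1/4, ahat h ω * 𝐞 (n * ω) := by
        simp only [F, ahat_eq_tsum_fourierChar, tsum_mul_right]

lemma re_fourierChar_nonneg {x : ℝ} (hx : |x| ≤ 1/4) : 0 ≤ (𝐞 x : ℂ).re := by
  rw [re_fourierChar]
  apply Real.cos_nonneg_of_mem_Icc
  rw [Set.mem_Icc, ← abs_le, abs_mul, abs_of_pos Real.two_pi_pos]
  nlinarith [Real.pi_pos]

lemma re_intervalIntegral_complex {f : ℝ → ℂ} (hf : Continuous f) (a b : ℝ) :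
    (∫ x in a..b, f x).re = ∫ x in a..b, (f x).re :=
  (intervalIntegral.intervalIntegral_re (hf.intervalIntegrable a b)).symm

lemma mul_re_g_le_re_conv_g {h : ℤ → ℂ} (hh : Summable fun k => ‖h k‖) {c : ℝ}
    (hreal : ∀ ω ∈ Set.Icc (-(1/4 : ℝ)) (1/4), (ahat h ω).im = 0)
    (hc : ∀ ω ∈ Set.Icc (-(1/4 : ℝ)) (1/4), c ≤ (ahat h ω).re) {n : ℤ} (hn : |n| ≤ 1) :
    c * (g n).re ≤ (conv h g n).re := by
  have hcont := continuous_ahat hh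
  have re_two_mul (z : ℂ) : (2 * z).re = 2 * z.re := by simp
  rw [g_eq_integral, conv_g_eq_integral hh, re_two_mul, re_two_mul,
    re_intervalIntegral_complex (by fun_prop), re_intervalIntegral_complex (by fun_prop),
    mul_left_comm, ← intervalIntegral.integral_const_mul]
  gcongr
  refine intervalIntegral.integral_mono_on (by norm_num)
    ((by fun_prop : Continuous _).intervalIntegrable _ _)
    ((by fun_prop : Continuous _).intervalIntegrable _ _) fun ω hω => ?_
  have hnω : |(n * ω : ℝ)| ≤ 1/4 := by
    rw [abs_mul]
    have : |(n : ℝ)| ≤ 1 := by exact_mod_cast hn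
    nlinarith [abs_le.mpr hω, abs_nonneg (n : ℝ), abs_nonneg ω]
  rw [Complex.mul_re, hreal ω hω, zero_mul, sub_zero]
  exact mul_le_mul_of_nonneg_right (hc ω hω) (re_fourierChar_nonneg hnω)

lemma two_div_pi_le_re_g {n : ℤ} (hn : |n| ≤ 1) : 2 / π ≤ (g n).re := by
  obtain ⟨hn₁, hn₂⟩ := abs_le.mp hn
  interval_cases n
  all_goals norm_num [g, neg_div, div_neg, ← Complex.ofReal_ofNat, ← Complex.ofReal_mul,
    ← Complex.ofReal_neg, ← Complex.ofReal_div]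
  exact div_le_one_of_le₀ Real.two_le_pi Real.pi_pos.le

theorem conv_power_lower_bound_general (a : ℤ → ℂ) (ha : Summable fun k => ‖a k‖)
    (ν : ℝ) (hν : 0 < ν)
    (hreal : ∀ ω : ℝ, (ahat a ω).im = 0)
    (hlb : ∀ ω : ℝ, ν ≤ (ahat a ω).re) :
    ∀ (s : ℕ) (n : ℤ), |n| ≤ 1 → 2 / Real.pi * ν ^ s ≤ ‖conv (convPow a s) g n‖ := by
  intro s n hn
  have hpow : ∀ ω, ahat (convPow a s) ω = ((ahat a ω).re ^ s : ℝ) := fun ω => by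
    have hra : ahat a ω = (ahat a ω).re := Complex.ext (by simp) (by simp [hreal ω])
    rw [ahat_convPow ha, Complex.ofReal_pow, ← hra]
  have hbound : ν ^ s * (g n).re ≤ (conv (convPow a s) g n).re :=
    mul_re_g_le_re_conv_g (summable_norm_convPow ha s)
      (fun ω _ => by rw [hpow, Complex.ofReal_im])
      (fun ω _ => by rw [hpow, Complex.ofReal_re]; gcongr; exact hlb ω) hn
  calc 2 / π * ν ^ s ≤ ν ^ s * (g n).re := by
        rw [mul_comm]; gcongr; exact two_div_pi_le_re_g hn
    _ ≤ (conv (convPow a s) g n).re := hbound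
    _ ≤ ‖conv (convPow a s) g n‖ := Complex.re_le_norm _

/-- if `â` is real with `μ ≥ â ≥ ν > 0` on `𝕋`, then for every `s ∈ ℕ`
and `|n| ≤ 1`, `|(a^(s) ∗ g)(n)| ≥ (2/π) ν^s`. -/
theorem conv_power_lower_bound (a : ℤ → ℂ) (ha : Summable fun k => ‖a k‖)
    (μ ν : ℝ) (hν : 0 < ν)
    (hreal : ∀ ω : ℝ, (ahat a ω).im = 0)
    (hlb : ∀ ω : ℝ, ν ≤ (ahat a ω).re) (hub : ∀ ω : ℝ, (ahat a ω).re ≤ μ) :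
    ∀ (s : ℕ) (n : ℤ), |n| ≤ 1 → 2 / Real.pi * ν ^ s ≤ ‖conv (convPow a s) g n‖ :=
  conv_power_lower_bound_general a ha ν hν hreal hlb
end

section
/- Let V(z_0,…,z_{m−1}) be the m×m Vandermonde matrix with rows (z_0^k, z_1^k, …, z_{m−1}^k) for k = 0,…,m−1, with distinct complex nodes z_0,…,z_{m−1}. Then the operator norm of its inverse satisfies ‖V^{−1}‖_op ≤ √m · max_{0≤i≤m−1} ∏_{j≠i} (1+|z_j|)/|z_j − z_i|. -/
/-- Operator (spectral) norm of a complex matrix, acting `ℓ² → ℓ²`. -/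
noncomputable def matOpNorm {m n : ℕ} (M : Matrix (Fin m) (Fin n) ℂ) : ℝ :=
  ‖LinearMap.toContinuousLinearMap (Matrix.toEuclideanLin M)‖

/-- The `m × m` Vandermonde matrix with rows `(z_0^k, …, z_{m-1}^k)`, `k = 0, …, m-1`. -/
def vandermonde' (m : ℕ) (z : Fin m → ℂ) : Matrix (Fin m) (Fin m) ℂ :=
  fun k i => z i ^ (k : ℕ)

/-!
The `i`-th row of `V⁻¹` is the coefficient vector of the Lagrange basis polynomial
`ℓᵢ = ∏_{j ≠ i} (X - z_j) / (z_i - z_j)`. The ℓ¹ norm of coefficient vectors is submultiplicative,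
and the factor `(X - z_j) / (z_i - z_j)` has ℓ¹ norm `(1 + |z_j|) / |z_j - z_i|`, so every row of
`V⁻¹` has ℓ¹ norm at most the `i`-th product. A matrix whose rows have ℓ¹ norm at most `T` maps
the unit ball of ℓ² into vectors with all `m` coordinates of modulus at most `T`, whence its
spectral norm is at most `√m T`.
-/

open Finset

namespace Polynomial

variable {R : Type*}

noncomputable def l1Norm [SeminormedRing R] (p : R[X]) : ℝ := p.sum fun _ a => ‖a‖

section SeminormedRing

variable [SeminormedRing R]

lemma l1Norm_eq_sum_of_support_subset {p : R[X]} {s : Finset ℕ} (hs : p.support ⊆ s) :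
    p.l1Norm = ∑ k ∈ s, ‖p.coeff k‖ :=
  sum_eq_of_subset _ (fun _ => norm_zero) hs

lemma l1Norm_nonneg (p : R[X]) : 0 ≤ p.l1Norm :=
  sum_nonneg fun _ _ => norm_nonneg _

@[simp]
lemma l1Norm_monomial (n : ℕ) (a : R) : (monomial n a).l1Norm = ‖a‖ :=
  sum_monomial_index a _ norm_zero

lemma l1Norm_add_le (p q : R[X]) : (p + q).l1Norm ≤ p.l1Norm + q.l1Norm := by
  rw [l1Norm_eq_sum_of_support_subset support_add,
    l1Norm_eq_sum_of_support_subset (subset_union_left (s₂ := q.support)),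
    l1Norm_eq_sum_of_support_subset (subset_union_right (s₁ := p.support)), ← sum_add_distrib]
  exact sum_le_sum fun k _ => by simpa only [coeff_add] using norm_add_le _ _

lemma l1Norm_sum_le {ι : Type*} (s : Finset ι) (f : ι → R[X]) :
    (∑ i ∈ s, f i).l1Norm ≤ ∑ i ∈ s, (f i).l1Norm :=
  le_sum_of_subadditive l1Norm (by simp [l1Norm]) l1Norm_add_le s f

lemma l1Norm_mul_le (p q : R[X]) : (p * q).l1Norm ≤ p.l1Norm * q.l1Norm := by
  rw [mul_eq_sum_sum]
  calc _ ≤ ∑ i ∈ p.support, ∑ j ∈ q.support, ‖p.coeff i * q.coeff j‖ := by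
        refine (l1Norm_sum_le _ _).trans (sum_le_sum fun i _ => ?_)
        exact (l1Norm_sum_le _ _).trans_eq (by simp)
    _ ≤ ∑ i ∈ p.support, ∑ j ∈ q.support, ‖p.coeff i‖ * ‖q.coeff j‖ := by
        gcongr with i _ j _
        exact norm_mul_le _ _
    _ = p.l1Norm * q.l1Norm := by rw [l1Norm, l1Norm, sum_def, sum_def, sum_mul_sum]

lemma l1Norm_eq_sum_fin {p : R[X]} {n : ℕ} (hp : p.natDegree < n) :
    p.l1Norm = ∑ k : Fin n, ‖p.coeff k‖ := by
  rw [l1Norm, sum_over_range' _ (fun _ => norm_zero) n hp,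
    Fin.sum_univ_eq_sum_range (fun k => ‖p.coeff k‖)]

end SeminormedRing

lemma l1Norm_prod_le [SeminormedCommRing R] [NormOneClass R] {ι : Type*} (s : Finset ι)
    (f : ι → R[X]) : (∏ i ∈ s, f i).l1Norm ≤ ∏ i ∈ s, (f i).l1Norm := by
  classical
  induction s using Finset.induction_on with
  | empty => rw [prod_empty, prod_empty, ← C_1, ← monomial_zero_left, l1Norm_monomial, norm_one]
  | insert i s hi ih =>
    rw [prod_insert hi, prod_insert hi]
    exact (l1Norm_mul_le _ _).trans (by gcongr; exact l1Norm_nonneg _)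

lemma sum_fin_coeff_mul_pow [Semiring R] {p : R[X]} {n : ℕ}
    (hp : p.natDegree < n) (x : R) : ∑ k : Fin n, p.coeff k * x ^ (k : ℕ) = p.eval x := by
  rw [eval_eq_sum_range' hp, Fin.sum_univ_eq_sum_range (fun k => p.coeff k * x ^ k)]

end Polynomial

open Polynomial

namespace Lagrange

variable {F ι : Type*} [NormedField F] [DecidableEq ι]

lemma l1Norm_basisDivisor (x y : F) :
    (basisDivisor x y).l1Norm = (1 + ‖y‖) / ‖y - x‖ := by
  rw [l1Norm_eq_sum_of_support_subset (s := range 2)]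
  · simp only [basisDivisor, coeff_C_mul, coeff_sub, coeff_X, coeff_C, norm_mul, norm_inv,
      norm_sub_rev x y, sum_range_succ, range_one, sum_singleton, one_ne_zero, ↓reduceIte,
      zero_sub, norm_neg, sub_zero, norm_one, mul_one]
    ring
  · exact supp_subset_range ((natDegree_C_mul_le _ _).trans_lt (by simp))

lemma l1Norm_basis_le (s : Finset ι) (v : ι → F) (i : ι) :
    (Lagrange.basis s v i).l1Norm ≤ ∏ j ∈ s.erase i, (1 + ‖v j‖) / ‖v j - v i‖ :=
  (l1Norm_prod_le _ _).trans_eq (prod_congr rfl fun _ _ => l1Norm_basisDivisor _ _)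

lemma natDegree_basis_univ_lt [Fintype ι] {v : ι → F} (hv : Function.Injective v) (i : ι) :
    (Lagrange.basis univ v i).natDegree < Fintype.card ι := by
  rw [natDegree_basis hv.injOn (mem_univ i), card_univ]
  exact Nat.sub_lt (Fintype.card_pos_iff.mpr ⟨i⟩) one_pos

end Lagrange

lemma inv_vandermonde' {m : ℕ} {z : Fin m → ℂ} (hz : Function.Injective z) :
    (vandermonde' m z)⁻¹ = Matrix.of fun i (k : Fin m) => (Lagrange.basis univ z i).coeff k := by
  refine Matrix.inv_eq_left_inv ?_
  ext i j
  have hdeg := Lagrange.natDegree_basis_univ_lt hz i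
  rw [Fintype.card_fin] at hdeg
  simp only [Matrix.mul_apply, Matrix.of_apply, vandermonde', sum_fin_coeff_mul_pow hdeg,
    Matrix.one_apply]
  split_ifs with hij
  · exact hij ▸ Lagrange.eval_basis_self hz.injOn (mem_univ i)
  · exact Lagrange.eval_basis_of_ne hij (mem_univ j)

lemma matOpNorm_le_sqrt_mul_of_row_sum_le {m n : ℕ} (A : Matrix (Fin m) (Fin n) ℂ) {T : ℝ}
    (hT : 0 ≤ T) (hA : ∀ i, ∑ k, ‖A i k‖ ≤ T) : matOpNorm A ≤ √m * T := by
  refine ContinuousLinearMap.opNorm_le_bound _ (by positivity) fun x => ?_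
  have hcoord : ∀ i, ‖(Matrix.toEuclideanLin A x) i‖ ≤ T * ‖x‖ := fun i =>
    calc ‖(Matrix.toEuclideanLin A x) i‖ = ‖∑ k, A i k * x k‖ := by
          simp [Matrix.toLpLin_apply, Matrix.mulVec, dotProduct]
      _ ≤ ∑ k, ‖A i k‖ * ‖x‖ := by
          refine (norm_sum_le _ _).trans (sum_le_sum fun k _ => ?_)
          rw [norm_mul]
          gcongr
          exact PiLp.norm_apply_le x k
      _ ≤ T * ‖x‖ := by rw [← sum_mul]; gcongr; exact hA i
  refine ((EuclideanSpace.basisFun (Fin m) ℂ).norm_le_card_mul_iSup_norm_inner _).trans ?_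
  rw [Fintype.card_fin, mul_assoc]
  gcongr
  refine Real.iSup_le (fun i => ?_) (by positivity)
  rw [EuclideanSpace.basisFun_apply, EuclideanSpace.inner_single_left, map_one, one_mul]
  exact hcoord i

theorem vandermonde_inverse_norm_bound_general (m : ℕ)
    (z : Fin m → ℂ) (hz : Function.Injective z) :
    matOpNorm ((vandermonde' m z)⁻¹) ≤
      Real.sqrt m *
        ⨆ i : Fin m, ∏ j ∈ Finset.univ.erase i, (1 + ‖z j‖) / ‖z j - z i‖ := by
  rw [inv_vandermonde' hz]
  refine matOpNorm_le_sqrt_mul_of_row_sum_le _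
    (Real.iSup_nonneg fun _ => prod_nonneg fun _ _ => by positivity) fun i => ?_
  have hdeg := Lagrange.natDegree_basis_univ_lt hz i
  rw [Fintype.card_fin] at hdeg
  calc ∑ k : Fin m, ‖(Lagrange.basis univ z i).coeff k‖ = (Lagrange.basis univ z i).l1Norm :=
        (l1Norm_eq_sum_fin hdeg).symm
    _ ≤ ∏ j ∈ univ.erase i, (1 + ‖z j‖) / ‖z j - z i‖ := Lagrange.l1Norm_basis_le _ _ _
    _ ≤ _ := le_ciSup (f := fun i => ∏ j ∈ univ.erase i, (1 + ‖z j‖) / ‖z j - z i‖)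
          (Finite.bddAbove_range _) i

/-- Gautschi: for the Vandermonde matrix `V` with distinct nodes,
`‖V⁻¹‖_op ≤ √m · max_i ∏_{j≠i} (1+|z_j|)/|z_j − z_i|`. -/
theorem vandermonde_inverse_norm_bound (m : ℕ) (hm : 0 < m)
    (z : Fin m → ℂ) (hz : Function.Injective z) :
    matOpNorm ((vandermonde' m z)⁻¹) ≤
      Real.sqrt m *
        ⨆ i : Fin m, ∏ j ∈ Finset.univ.erase i, (1 + ‖z j‖) / ‖z j - z i‖ :=
  vandermonde_inverse_norm_bound_general m z hz
end
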